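/- arXiv:2511.06882 — 2 statements merged into one kernel-verified Lean document; each statement's English description precedes it below -/
import Mathlib

section
/- Let u > v ≥ 1 and T be positive integers with T ≥ u + v. The two conditions C1: (T−u)/v ≥ ⌊(T−v)/u⌋ + 1 and C2: (T−u−v)/(2u−v) ≤ ⌊(T−u−v)/u⌋ together cover all T with T ≥ u + v + u·v/(u−v) and all T with u ∣ (T−u−v); i.e., if T ≥ u + v + (u·v)/(u−v) then C1 holds, and if u divides T−u−v then C2 holds. -/
theorem stmt_16 (u v T : ℕ) (hv : 1 ≤ v) (hvu : v < u) (hT : u + v ≤ T) :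
    ((T : ℚ) ≥ (u : ℚ) + v + (u * v) / ((u : ℚ) - v) →
      ((T : ℚ) - u) / v ≥ (⌊((T : ℚ) - v) / u⌋ : ℚ) + 1) ∧
    (u ∣ (T - u - v) →
      ((T : ℚ) - u - v) / (2 * u - v) ≤ (⌊((T : ℚ) - u - v) / u⌋ : ℚ)) := by
  have hu0 : (0 : ℚ) < u := by exact_mod_cast Nat.lt_of_lt_of_le (Nat.zero_lt_of_lt hvu) le_rfl
  have hv0 : (0 : ℚ) < v := by exact_mod_cast hv
  have hvu' : (v : ℚ) < u := by exact_mod_cast hvu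
  have huv0 : (0 : ℚ) < (u : ℚ) - v := by linarith
  constructor
  · intro h
    have hk : (u : ℚ) * v ≤ ((T : ℚ) - (u + v)) * ((u : ℚ) - v) := by
      rw [ge_iff_le, ← sub_nonneg] at h
      have := (div_le_iff₀ huv0).mp (by linarith : (u : ℚ) * v / ((u : ℚ) - v) ≤ (T : ℚ) - (u + v))
      linarith
    have h1 : ((T : ℚ) - v) / u + 1 ≤ ((T : ℚ) - u) / v := by
      rw [div_add' _ _ _ hu0.ne', div_le_div_iff₀ hu0 hv0]
      nlinarith
    have h2 : (⌊((T : ℚ) - v) / u⌋ : ℚ) ≤ ((T : ℚ) - v) / u := Int.floor_le _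
    linarith
  · intro h
    obtain ⟨k, hk⟩ := h
    have he : (T : ℚ) = u + v + u * k := by
      have : T = u + v + u * k := by omega
      exact_mod_cast this
    have hfl : ⌊((T : ℚ) - u - v) / u⌋ = (k : ℤ) := by
      rw [he]
      have : ((u : ℚ) + v + u * k - u - v) / u = (k : ℚ) := by
        field_simp; ring
      rw [this]
      exact_mod_cast Int.floor_intCast (k : ℤ)
    rw [hfl, he]
    have h2uv : (0 : ℚ) < 2 * u - v := by linarith
    rw [div_le_iff₀ h2uv]
    push_cast
    nlinarith [Nat.cast_nonneg (α := ℚ) k]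
end

section
/- Let p ≥ 1 and b1 < b2 be positive integers, q = T − b1 − p·b2 with 0 ≤ q < b2 and T ≥ b1 + b2. The SR extended delay profile values are D_SR = (p·b1+q repeated b2 times, p·b1 repeated q times, (p−1)·b1 repeated b2 times, …, b1 repeated b2 times), and the RD delay profile values are D_RD = (b2 repeated q times, b2+q repeated b2 times, 2b2+q repeated b2 times, …, p·b2+q repeated b2 times). Both sequences have length T − b1 = p·b2 + q. Then under the constraint T ≤ (2p−1)b2 − (p−2)b1, for every index i ∈ {1,…,p·b2+q}, D_SR(i) + D_RD(i) ≤ T. -/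
/-- The SR extended delay profile: first `b2` entries equal `p*b1+q`, the next
`q` entries equal `p*b1`, then for `l = 1, …, p-1` a group of `b2` entries equal
to `(p-l)*b1`. -/
def DSR (b1 b2 p q i : ℕ) : ℕ :=
  if i < b2 then p * b1 + q
  else if i < b2 + q then p * b1
  else (p - ((i - (b2 + q)) / b2 + 1)) * b1

/-- The RD delay profile: first `q` entries equal `b2`, then for `l = 1, …, p`
a group of `b2` entries equal to `l*b2 + q`. -/
def DRD (b2 q i : ℕ) : ℕ :=
  if i < q then b2
  else ((i - q) / b2 + 1) * b2 + q

theorem stmt_18 (b1 b2 T p q : ℕ) (hb1 : 0 < b1) (h12 : b1 < b2)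
    (hp : 1 ≤ p) (hq : q < b2) (hdecomp : T = b1 + p * b2 + q)
    (hcon : (T : ℤ) ≤ (2 * p - 1) * b2 - (p - 2) * b1) :
    ∀ i : ℕ, i < p * b2 + q → DSR b1 b2 p q i + DRD b2 q i ≤ T := by
  intro i hi
  have hb2 : 0 < b2 := hb1.trans h12
  have hkey : (p : ℤ) * b1 + b2 + q ≤ b1 + p * b2 := by
    rw [hdecomp] at hcon; push_cast at hcon; linarith
  have hkey2 : p * b1 + b2 ≤ b1 + p * b2 := by
    have := Nat.mul_le_mul_left p h12.le
    omega
  unfold DSR DRD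
  by_cases h1 : i < b2
  · rw [if_pos h1]
    by_cases h2 : i < q
    · rw [if_pos h2]
      omega
    · rw [if_neg h2]
      have h0 : (i - q) / b2 = 0 := Nat.div_eq_of_lt (by omega)
      rw [h0]
      zify
      rw [hdecomp]
      push_cast
      linarith
  · rw [if_neg h1]
    have hqi : ¬ i < q := by omega
    rw [if_neg hqi]
    by_cases h3 : i < b2 + q
    · rw [if_pos h3]
      have h0 : (i - q) / b2 = 0 := Nat.div_eq_of_lt (by omega)
      rw [h0]
      omega
    · rw [if_neg h3]
      obtain ⟨k, rfl⟩ : ∃ k, p = k + 1 := ⟨p - 1, by omega⟩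
      set j := i - (b2 + q) with hjdef
      have hiq : i - q = j + b2 := by omega
      rw [hiq, Nat.add_div_right _ hb2]
      have hjlt : j < k * b2 := by
        have hkk : (k + 1) * b2 = k * b2 + b2 := by ring
        omega
      have hd : j / b2 < k := by
        rw [Nat.div_lt_iff_lt_mul hb2]
        exact hjlt
      set d := j / b2 with hddef
      obtain ⟨m, hm2⟩ : ∃ m, k + 1 = (m + 1) + d + 1 := ⟨k - d - 1, by omega⟩
      rw [hm2]
      have heq : m + 1 + d + 1 - (d + 1) = m + 1 := by omega
      rw [heq]
      subst hdecomp
      rw [hm2]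
      nlinarith [Nat.mul_le_mul_left m h12.le]
end
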